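/- arXiv:1109.6180 — 3 statements merged into one kernel-verified Lean document; each statement's English description precedes it below -/
import Mathlib

section
/- Let p be an odd prime and suppose r ≥ 1. The monomial y_1^p·w_1·w_2·…·w_s does not lie in the Hilbert ideal I_H; consequently the top degree of the coinvariant ring R/I_H is at least p + s. -/
open MvPolynomial

noncomputable section

abbrev DVar (r s : ℕ) := (Fin r ⊕ Fin r) ⊕ (Fin s ⊕ Fin s)

def dswap {r s : ℕ} : DVar r s → DVar r s
  | .inl (.inl i) => .inl (.inr i)
  | .inl (.inr i) => .inl (.inl i)
  | .inr (.inl j) => .inr (.inr j)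
  | .inr (.inr j) => .inr (.inl j)

def sigmaMap (F : Type*) [Field F] (r s : ℕ) :
    MvPolynomial (DVar r s) F →ₐ[F] MvPolynomial (DVar r s) F :=
  MvPolynomial.rename dswap

def rhoCoeff {F : Type*} [Field F] {r s : ℕ} (lam : Fin r → F) : DVar r s → F
  | .inl (.inl i) => lam i
  | .inl (.inr i) => (lam i)⁻¹
  | .inr _ => 1

def rhoMap (F : Type*) [Field F] (r s : ℕ) (lam : Fin r → F) :
    MvPolynomial (DVar r s) F →ₐ[F] MvPolynomial (DVar r s) F :=
  MvPolynomial.aeval fun v => MvPolynomial.C (rhoCoeff lam v) * MvPolynomial.X v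

def HilbertIdeal (F : Type*) [Field F] (r s : ℕ) (lam : Fin r → F) :
    Ideal (MvPolynomial (DVar r s) F) :=
  Ideal.span {f | sigmaMap F r s f = f ∧ rhoMap F r s lam f = f ∧ constantCoeff f = 0}

def IsMonomial {σ F : Type*} [CommSemiring F] (f : MvPolynomial σ F) : Prop :=
  ∃ d : σ →₀ ℕ, f = monomial d 1

def GSet (F : Type*) [Field F] (r s p : ℕ) (lam : Fin r → F) :
    Set (MvPolynomial (DVar r s) F) :=
  {f | ∃ m, IsMonomial m ∧ rhoMap F r s lam m = m ∧ sigmaMap F r s m ≠ m ∧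
      m.totalDegree ≤ p ∧ f = m + sigmaMap F r s m} ∪
  {f | ∃ (m : MvPolynomial (DVar r s) F) (v : DVar r s), IsMonomial m ∧ rhoMap F r s lam m = m ∧ m.totalDegree ≤ p ∧
      X v ∣ m ∧ f = X v * m} ∪
  {f | (∃ i : Fin r, f = X (Sum.inl (Sum.inl i)) * X (Sum.inl (Sum.inr i))) ∨
       (∃ j : Fin s, f = X (Sum.inr (Sum.inl j)) * X (Sum.inr (Sum.inr j)))}

def lmExp {σ F : Type*} [CommSemiring F] (mo : MonomialOrder σ) (f : MvPolynomial σ F) :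
    σ →₀ ℕ :=
  mo.toSyn.symm (f.support.sup fun d => mo.toSyn d)

/-!
Let `S` be the set of exponents of the monomials `u^p * ∏ j, v_j` with `u ∈ {x₁, y₁}` and
`v_j ∈ {z_j, w_j}`, and let `L g = ∑ μ ∈ S, coeff μ g`. For an invariant `f` without constant
term, the terms `coeff ν h * coeff m f` of `L (h * f)` are paired off by `m ↦ σ m`. The pairing
stays inside `S` because `ρ`-invariance of a monomial `x₁^a y₁^b ⋯` dividing an element of `S`
forces `a, b ∈ {0, p}`; it has no fixed points because no element of `S` involves a variable
together with its `σ`-image; and paired terms are equal, so they cancel in characteristic two.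
Hence `L` vanishes on the Hilbert ideal, while `L (y₁^p * ∏ j, w_j) = 1`.
-/

namespace MvPolynomial

variable {σ R : Type*} [CommRing R] [CharP R 2] {e : σ → σ}

theorem sum_coeff_mul_eq_zero_of_rename_eq (he : Function.Involutive e) {f : MvPolynomial σ R}
    (hf : rename e f = f) (hf0 : constantCoeff f = 0) (S : Finset (σ →₀ ℕ))
    (hS : ∀ ν m, ν + m ∈ S → coeff m f ≠ 0 → ν + m.mapDomain e ∈ S)
    (hdisj : ∀ μ ∈ S, ∀ v, μ v = 0 ∨ μ (e v) = 0) (g : MvPolynomial σ R) :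
    ∑ μ ∈ S, coeff μ (g * f) = 0 := by
  classical
  have hcoeff (m : σ →₀ ℕ) : coeff (m.mapDomain e) f = coeff m f := by
    conv_lhs => rw [← hf]
    exact coeff_rename_mapDomain e he.injective f m
  have hmap (m : σ →₀ ℕ) : (m.mapDomain e).mapDomain e = m := by
    rw [← Finsupp.mapDomain_comp, he.comp_self, Finsupp.mapDomain_id]
  have hfix {ν m : σ →₀ ℕ} (hμ : ν + m ∈ S) (hm : m.mapDomain e = m) : m = 0 := by
    ext v
    have hmv : m (e v) = m v := by
      rw [← hm, Finsupp.mapDomain_apply he.injective, hm]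
    have h := hdisj _ hμ v
    simp only [Finsupp.add_apply] at h
    simp only [Finsupp.coe_zero, Pi.zero_apply]
    omega
  simp_rw [coeff_mul]
  rw [Finset.sum_sigma', ← Finset.sum_filter_ne_zero]
  refine Finset.sum_involution (fun x _ => ⟨x.2.1 + x.2.2.mapDomain e, x.2.1, x.2.2.mapDomain e⟩)
    ?_ ?_ ?_ ?_ <;> rintro ⟨μ, ν, m⟩ hx <;>
    simp only [Finset.mem_filter, Finset.mem_sigma, Finset.HasAntidiagonal.mem_antidiagonal] at hx ⊢
  · rw [hcoeff]
    exact CharTwo.add_self_eq_zero _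
  · intro hne heq
    obtain ⟨⟨hμ, rfl⟩, -⟩ := hx
    rw [hfix hμ (congrArg (fun x => x.2.2) heq), ← constantCoeff_eq, hf0, mul_zero] at hne
    exact hne rfl
  · obtain ⟨⟨hμ, rfl⟩, hne⟩ := hx
    refine ⟨⟨hS ν m hμ (right_ne_zero_of_mul hne), trivial⟩, ?_⟩
    rwa [hcoeff]
  · obtain ⟨⟨-, rfl⟩, -⟩ := hx
    simp only [hmap]

end MvPolynomial

theorem AddMonoidHom.map_eq_zero_of_mem_ideal_span {A M : Type*} [CommSemiring A]
    [AddCommMonoid M] (L : A →+ M) {s : Set A} (hs : ∀ f ∈ s, ∀ g, L (g * f) = 0) {x : A}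
    (hx : x ∈ Ideal.span s) : L x = 0 := by
  suffices ∀ g, L (g * x) = 0 by simpa using this 1
  induction hx using Submodule.span_induction with
  | mem f hf => exact hs f hf
  | zero => simp
  | add a b _ _ ha hb => intro g; rw [mul_add, map_add, ha, hb, add_zero]
  | smul c a _ ha => intro g; rw [smul_eq_mul, ← mul_assoc]; exact ha _

theorem eq_zero_or_eq_of_pow_eq_one_of_le {M : Type*} [Monoid M] {a : M} {p n : ℕ}
    (hp : p.Prime) (ha : a ^ p = 1) (ha1 : a ≠ 1) (hn : a ^ n = 1) (hnp : n ≤ p) :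
    n = 0 ∨ n = p := by
  have : Fact p.Prime := ⟨hp⟩
  have hdvd : p ∣ n := orderOf_eq_prime ha ha1 ▸ orderOf_dvd_of_pow_eq_one hn
  rcases Nat.eq_zero_or_pos n with h | h
  · exact .inl h
  · exact .inr (Nat.eq_of_dvd_of_lt_two_mul h.ne' hdvd (by omega))

section Dihedral

variable {F : Type*} [Field F] {r s : ℕ}

theorem dswap_involutive : Function.Involutive (dswap (r := r) (s := s)) := by
  rintro ((i | i) | (j | j)) <;> rfl

theorem mapDomain_dswap_apply (μ : DVar r s →₀ ℕ) (v : DVar r s) :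
    μ.mapDomain dswap v = μ (dswap v) := by
  rw [← Finsupp.mapDomain_apply dswap_involutive.injective μ (dswap v), dswap_involutive v]

def rhoWeight (lam : Fin r → F) (d : DVar r s →₀ ℕ) : F :=
  d.prod fun v n => rhoCoeff lam v ^ n

theorem rhoMap_monomial (lam : Fin r → F) (d : DVar r s →₀ ℕ) (c : F) :
    rhoMap F r s lam (monomial d c) = monomial d (rhoWeight lam d * c) := by
  rw [rhoMap, aeval_monomial, algebraMap_eq, Finsupp.prod]
  simp_rw [mul_pow, Finset.prod_mul_distrib, ← map_pow, ← map_prod, prod_X_pow_eq_monomial]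
  rw [← mul_assoc, ← C_mul, C_mul_monomial, mul_one, mul_comm c, rhoWeight, Finsupp.prod]

theorem coeff_rhoMap (lam : Fin r → F) (f : MvPolynomial (DVar r s) F) (d : DVar r s →₀ ℕ) :
    coeff d (rhoMap F r s lam f) = rhoWeight lam d * coeff d f := by
  induction f using MvPolynomial.induction_on' with
  | monomial d' c =>
    rw [rhoMap_monomial, coeff_monomial, coeff_monomial]
    split_ifs with h
    · rw [h]
    · rw [mul_zero]
  | add f g hf hg => rw [map_add, coeff_add, coeff_add, hf, hg, mul_add]

theorem rhoWeight_eq_one_of_coeff_ne_zero {lam : Fin r → F} {f : MvPolynomial (DVar r s) F}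
    (hf : rhoMap F r s lam f = f) {d : DVar r s →₀ ℕ} (hd : coeff d f ≠ 0) :
    rhoWeight lam d = 1 := by
  have h := coeff_rhoMap lam f d
  rwa [hf, eq_comm, mul_eq_right₀ hd] at h

theorem rhoWeight_eq_of_forall_ne (lam : Fin r → F) {i₀ : Fin r} {d : DVar r s →₀ ℕ}
    (hx : ∀ i ≠ i₀, d (.inl (.inl i)) = 0) (hy : ∀ i ≠ i₀, d (.inl (.inr i)) = 0) :
    rhoWeight lam d = lam i₀ ^ d (.inl (.inl i₀)) * (lam i₀)⁻¹ ^ d (.inl (.inr i₀)) := by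
  rw [rhoWeight, Finsupp.prod_fintype _ _ fun _ => pow_zero _]
  simp only [Fintype.prod_sum_type, rhoCoeff, one_pow, Finset.prod_const_one, mul_one]
  rw [Finset.prod_eq_single i₀ (fun i _ hi => by rw [hx i hi, pow_zero]) (by simp),
    Finset.prod_eq_single i₀ (fun i _ hi => by rw [hy i hi, pow_zero]) (by simp)]

variable (p : ℕ) (i₀ : Fin r)

def yPowProdWExp : DVar r s →₀ ℕ :=
  Finsupp.single (.inl (.inr i₀)) p + ∑ j, Finsupp.single (.inr (.inr j)) 1

@[simp] theorem yPowProdWExp_inl_inl (i : Fin r) :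
    yPowProdWExp (s := s) p i₀ (.inl (.inl i)) = 0 := by
  simp [yPowProdWExp]

@[simp] theorem yPowProdWExp_inl_inr (i : Fin r) :
    yPowProdWExp (s := s) p i₀ (.inl (.inr i)) = if i₀ = i then p else 0 := by
  simp [yPowProdWExp, Finsupp.single_apply]

@[simp] theorem yPowProdWExp_inr_inl (j : Fin s) : yPowProdWExp p i₀ (.inr (.inl j)) = 0 := by
  simp [yPowProdWExp]

@[simp] theorem yPowProdWExp_inr_inr (j : Fin s) : yPowProdWExp p i₀ (.inr (.inr j)) = 1 := by
  simp [yPowProdWExp, Finsupp.single_apply]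

theorem X_pow_mul_prod_X_eq_monomial :
    (X (.inl (.inr i₀)) ^ p * ∏ j : Fin s, X (.inr (.inr j)) : MvPolynomial (DVar r s) F) =
      monomial (yPowProdWExp p i₀) 1 := by
  rw [yPowProdWExp, ← one_mul (1 : F), ← monomial_mul, monomial_sum_one, X_pow_eq_monomial]
  rfl

theorem isHomogeneous_X_pow_mul_prod_X :
    IsHomogeneous
      (X (.inl (.inr i₀)) ^ p * ∏ j : Fin s, X (.inr (.inr j)) : MvPolynomial (DVar r s) F)
      (p + s) := by
  simpa using (isHomogeneous_X_pow _ p).mul (IsHomogeneous.prod Finset.univ _ (fun _ => 1)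
    fun j _ => isHomogeneous_X F (.inr (.inr j) : DVar r s))

/-- The exponents of the monomials `u^p * ∏ j, v_j` with `u ∈ {x_{i₀}, y_{i₀}}` and
`v_j ∈ {z_j, w_j}`. -/
def shapeSet : Finset (DVar r s →₀ ℕ) :=
  let c := yPowProdWExp p i₀ + (yPowProdWExp p i₀).mapDomain dswap
  {μ ∈ Finset.Iic c | μ + μ.mapDomain dswap = c ∧
    (μ (.inl (.inl i₀)) = 0 ∨ μ (.inl (.inl i₀)) = p)}

variable {p i₀}

theorem yPowProdWExp_mem_shapeSet : yPowProdWExp (s := s) p i₀ ∈ shapeSet p i₀ := by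
  simp [shapeSet]

theorem add_apply_dswap_of_mem_shapeSet {μ : DVar r s →₀ ℕ} (hμ : μ ∈ shapeSet p i₀)
    (v : DVar r s) :
    μ v + μ (dswap v) = yPowProdWExp p i₀ v + yPowProdWExp p i₀ (dswap v) := by
  have h := DFunLike.congr_fun (Finset.mem_filter.1 hμ).2.1 v
  simpa only [Finsupp.add_apply, mapDomain_dswap_apply] using h

theorem eq_zero_or_dswap_eq_zero_of_mem_shapeSet {μ : DVar r s →₀ ℕ} (hμ : μ ∈ shapeSet p i₀)
    (v : DVar r s) : μ v = 0 ∨ μ (dswap v) = 0 := by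
  have hpair := add_apply_dswap_of_mem_shapeSet hμ v
  have hx₀ := (Finset.mem_filter.1 hμ).2.2
  rcases v with (i | i) | (j | j) <;> simp only [dswap, yPowProdWExp_inl_inl,
    yPowProdWExp_inl_inr, yPowProdWExp_inr_inl, yPowProdWExp_inr_inr] at hpair ⊢
  all_goals try split_ifs at hpair with h; try subst h
  all_goals omega

theorem add_mapDomain_dswap_mem_shapeSet {lam : Fin r → F} (hp : p.Prime)
    (hlam : lam i₀ ^ p = 1) (hlam1 : lam i₀ ≠ 1) {ν m : DVar r s →₀ ℕ}
    (hμ : ν + m ∈ shapeSet p i₀) (hm : rhoWeight lam m = 1) :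
    ν + m.mapDomain dswap ∈ shapeSet p i₀ := by
  have hpair := add_apply_dswap_of_mem_shapeSet hμ
  have hsum : ν + m.mapDomain dswap + (ν + m.mapDomain dswap).mapDomain dswap =
      yPowProdWExp p i₀ + (yPowProdWExp p i₀).mapDomain dswap := by
    rw [← (Finset.mem_filter.1 hμ).2.1]
    ext v
    simp only [Finsupp.add_apply, mapDomain_dswap_apply, dswap_involutive v]
    omega
  have hoff (i : Fin r) (hi : i ≠ i₀) : m (.inl (.inl i)) = 0 ∧ m (.inl (.inr i)) = 0 := by
    have h := hpair (.inl (.inl i))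
    simp only [dswap, Finsupp.add_apply, yPowProdWExp_inl_inl, yPowProdWExp_inl_inr,
      if_neg hi.symm] at h
    omega
  rw [rhoWeight_eq_of_forall_ne lam (fun i hi => (hoff i hi).1) (fun i hi => (hoff i hi).2),
    inv_pow] at hm
  have hpair₀ := hpair (.inl (.inl i₀))
  have hx₀ := (Finset.mem_filter.1 hμ).2.2
  simp only [dswap, Finsupp.add_apply, yPowProdWExp_inl_inl, yPowProdWExp_inl_inr,
    ↓reduceIte] at hpair₀ hx₀
  refine Finset.mem_filter.2 ⟨Finset.mem_Iic.2 (hsum ▸ le_self_add), hsum, ?_⟩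
  simp only [Finsupp.add_apply, mapDomain_dswap_apply, dswap]
  rcases hx₀ with hx | hx
  · rw [show m (.inl (.inl i₀)) = 0 by omega, pow_zero, one_mul, inv_eq_one] at hm
    have := eq_zero_or_eq_of_pow_eq_one_of_le hp hlam hlam1 hm (by omega)
    omega
  · rw [show m (.inl (.inr i₀)) = 0 by omega, pow_zero, inv_one, mul_one] at hm
    have := eq_zero_or_eq_of_pow_eq_one_of_le hp hlam hlam1 hm (by omega)
    omega

theorem sum_coeff_shapeSet_eq_zero_of_mem_hilbertIdeal [CharP F 2] {lam : Fin r → F}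
    (hp : p.Prime) (hlam : lam i₀ ^ p = 1) (hlam1 : lam i₀ ≠ 1) {x : MvPolynomial (DVar r s) F}
    (hx : x ∈ HilbertIdeal F r s lam) : ∑ μ ∈ shapeSet p i₀, coeff μ x = 0 := by
  have h := AddMonoidHom.map_eq_zero_of_mem_ideal_span
    (∑ μ ∈ shapeSet p i₀, coeffAddMonoidHom μ) ?_ hx
  · simpa using h
  rintro f ⟨hσ, hρ, hf0⟩ g
  simpa using sum_coeff_mul_eq_zero_of_rename_eq dswap_involutive hσ hf0 (shapeSet p i₀)
    (fun ν m hμ hm => add_mapDomain_dswap_mem_shapeSet hp hlam hlam1 hμ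
      (rhoWeight_eq_one_of_coeff_ne_zero hρ hm))
    (fun _ hμ => eq_zero_or_dswap_eq_zero_of_mem_shapeSet hμ) g

end Dihedral

theorem y_pow_p_mul_prod_w_not_mem_hilbertIdeal_general
    {F : Type*} [Field F] [CharP F 2] {r s p : ℕ} (hp : p.Prime) (hr : 1 ≤ r)
    (lam : Fin r → F) (hlam : ∀ i, lam i ^ p = 1 ∧ lam i ≠ 1) :
    ((X (Sum.inl (Sum.inr (⟨0, hr⟩ : Fin r)))) ^ p * ∏ j : Fin s, X (Sum.inr (Sum.inr j))
        : MvPolynomial (DVar r s) F) ∉ HilbertIdeal F r s lam ∧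
    ∃ f : MvPolynomial (DVar r s) F,
      f.IsHomogeneous (p + s) ∧ f ∉ HilbertIdeal F r s lam := by
  have hnot : (X (.inl (.inr (⟨0, hr⟩ : Fin r))) ^ p * ∏ j : Fin s, X (.inr (.inr j))
      : MvPolynomial (DVar r s) F) ∉ HilbertIdeal F r s lam := by
    intro hmem
    have h := sum_coeff_shapeSet_eq_zero_of_mem_hilbertIdeal hp (hlam ⟨0, hr⟩).1
      (hlam ⟨0, hr⟩).2 hmem
    simp [X_pow_mul_prod_X_eq_monomial, coeff_monomial, yPowProdWExp_mem_shapeSet] at h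
  exact ⟨hnot, _, isHomogeneous_X_pow_mul_prod_X p _, hnot⟩

/-- For `p` an odd prime and `r ≥ 1`, the monomial `y₁^p·w₁⋯w_s` does not lie
in the Hilbert ideal `I_H`; consequently the top degree of the coinvariants is at least
`p + s`. -/
theorem y_pow_p_mul_prod_w_not_mem_hilbertIdeal
    {F : Type*} [Field F] [CharP F 2] {r s p : ℕ} (hp : p.Prime) (hodd : Odd p) (hr : 1 ≤ r)
    (ζ : F) (hζ : IsPrimitiveRoot ζ p)
    (lam : Fin r → F) (hlam : ∀ i, lam i ^ p = 1 ∧ lam i ≠ 1) :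
    ((X (Sum.inl (Sum.inr (⟨0, hr⟩ : Fin r)))) ^ p * ∏ j : Fin s, X (Sum.inr (Sum.inr j))
        : MvPolynomial (DVar r s) F) ∉ HilbertIdeal F r s lam ∧
    ∃ f : MvPolynomial (DVar r s) F,
      f.IsHomogeneous (p + s) ∧ f ∉ HilbertIdeal F r s lam :=
  y_pow_p_mul_prod_w_not_mem_hilbertIdeal_general hp hr lam hlam
end
end

section
/- Let p be an odd prime. With respect to the lexicographic monomial order on F[x,y] with x > y, the ideal generated by the leading monomials of the nonzero elements of the Hilbert ideal I_H equals the ideal generated by xy, x^p and y^{p+1}, and this generating set is minimal. In particular, every Gröbner basis of I_H with respect to this order contains an element of degree p + 1. -/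
/-!
Send `F[x,y]` to `F[t]` along the two coordinate axes (`x ↦ t, y ↦ 0` and `x ↦ 0, y ↦ t`).
Since `ρ` acts on the first axis as `t ↦ λt` and `λ` is a primitive `p`-th root of unity, every
invariant without constant term restricts to a multiple of `t^p` there, and `σ` makes the two
restrictions equal. Polynomials whose restrictions are multiples of `t^p` that agree modulo
`t^(p+1)` form an ideal, because the two restrictions of any polynomial agree modulo `t`; it
contains `I_H`. Its nonzero elements have no leading monomial `x^j` with `j < p` or `y^j` with
`j ≤ p` (for `y^p`, the equal coefficient of `x^p > y^p` would be nonzero), so every leading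
monomial is divisible by `xy`, `x^p` or `y^(p+1)`. These three are the leading monomials of
`xy`, `x^p + y^p` and `y^(p+1) = y (x^p + y^p) + x^(p-1) · xy` (characteristic two). A Gröbner
basis needs an element whose leading monomial divides, hence equals, `y^(p+1)`, and all
lex-smaller monomials are lower powers of `y`.
-/

open MvPolynomial

noncomputable section

/-- The algebra automorphism `σ` of `F[x,y]` swapping `x = X 0` and `y = X 1`. -/
def sig2 (F : Type*) [Field F] : MvPolynomial (Fin 2) F →ₐ[F] MvPolynomial (Fin 2) F :=
  aeval ![X 1, X 0]

/-- The algebra endomorphism `ρ` of `F[x,y]` with `ρ(x) = λ·x` and `ρ(y) = λ⁻¹·y`. -/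
def rho2 (F : Type*) [Field F] (lam : F) :
    MvPolynomial (Fin 2) F →ₐ[F] MvPolynomial (Fin 2) F :=
  aeval ![C lam * X 0, C lam⁻¹ * X 1]

/-- The Hilbert ideal of the dihedral action on `F[x,y]`: the ideal generated by the
`G`-invariant polynomials of positive degree (equivalently, with zero constant term). -/
def HilbertIdeal2 (F : Type*) [Field F] (lam : F) : Ideal (MvPolynomial (Fin 2) F) :=
  Ideal.span {f | sig2 F f = f ∧ rho2 F lam f = f ∧ constantCoeff f = 0}

open scoped MonomialOrder

section AxisRestriction

variable {σ R : Type*} [CommSemiring R] [DecidableEq σ]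

def axisRestriction (i : σ) : MvPolynomial σ R →ₐ[R] Polynomial R :=
  aeval (Pi.single i Polynomial.X)

theorem coeff_axisRestriction (i : σ) (f : MvPolynomial σ R) (j : ℕ) :
    (axisRestriction i f).coeff j = coeff (Finsupp.single i j) f := by
  induction f using MvPolynomial.induction_on' with
  | monomial d c =>
    rw [axisRestriction, aeval_monomial, coeff_monomial, Polynomial.algebraMap_eq]
    by_cases hd : d = Finsupp.single i (d i)
    · rw [hd, Finsupp.prod_single_index (by simp), Pi.single_eq_same,
        Polynomial.coeff_C_mul_X_pow]
      simp only [(Finsupp.single_injective i).eq_iff, eq_comm]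
    · obtain ⟨k, hki, hk⟩ : ∃ k, k ≠ i ∧ d k ≠ 0 := by
        by_contra! h
        exact hd (Finsupp.ext fun k => by
          by_cases hk : k = i
          · simp [hk]
          · simp [Ne.symm hk, h k hk])
      rw [Finsupp.prod, Finset.prod_eq_zero (Finsupp.mem_support_iff.mpr hk)
        (by simp [Pi.single_eq_of_ne hki, hk]), mul_zero, Polynomial.coeff_zero, if_neg]
      rintro rfl
      simp [Ne.symm hki] at hk
  | add f g hf hg => simp [hf, hg]

end AxisRestriction

section AxisIdeal

variable (R : Type*) [CommRing R]

def axisIdeal (n : ℕ) : Ideal (MvPolynomial (Fin 2) R) where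
  carrier := {f | (∀ i, Polynomial.X ^ n ∣ axisRestriction i f) ∧
    Polynomial.X ^ (n + 1) ∣ axisRestriction 0 f - axisRestriction 1 f}
  zero_mem' := by simp
  add_mem' := by
    rintro f g ⟨hf, hf'⟩ ⟨hg, hg'⟩
    refine ⟨fun i => ?_, ?_⟩
    · rw [map_add]; exact dvd_add (hf i) (hg i)
    · rw [map_add, map_add, add_sub_add_comm]; exact dvd_add hf' hg'
  smul_mem' := by
    rintro c f ⟨hf, hf'⟩
    have hc : Polynomial.X ∣ axisRestriction 0 c - axisRestriction 1 c := by
      rw [Polynomial.X_dvd_iff, Polynomial.coeff_sub, coeff_axisRestriction,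
        coeff_axisRestriction, Finsupp.single_zero, Finsupp.single_zero, sub_self]
    refine ⟨fun i => ?_, ?_⟩
    · rw [smul_eq_mul, map_mul]; exact dvd_mul_of_dvd_right (hf i) _
    · rw [smul_eq_mul, map_mul, map_mul,
        show ∀ a b c d : Polynomial R, a * b - c * d = a * (b - d) + (a - c) * d by
          intros; ring]
      refine dvd_add (dvd_mul_of_dvd_right hf' _) ?_
      rw [pow_succ']
      exact mul_dvd_mul hc (hf 1)

variable {R}

theorem coeff_single_eq_zero_of_mem_axisIdeal {n : ℕ} {f : MvPolynomial (Fin 2) R}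
    (hf : f ∈ axisIdeal R n) (i : Fin 2) {j : ℕ} (hj : j < n) :
    coeff (Finsupp.single i j) f = 0 := by
  rw [← coeff_axisRestriction]
  exact Polynomial.X_pow_dvd_iff.mp (hf.1 i) j hj

theorem coeff_single_zero_eq_coeff_single_one_of_mem_axisIdeal {n : ℕ}
    {f : MvPolynomial (Fin 2) R} (hf : f ∈ axisIdeal R n) :
    coeff (Finsupp.single 0 n) f = coeff (Finsupp.single 1 n) f := by
  rw [← coeff_axisRestriction, ← coeff_axisRestriction, ← sub_eq_zero, ← Polynomial.coeff_sub]
  exact Polynomial.X_pow_dvd_iff.mp hf.2 n n.lt_succ_self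

end AxisIdeal

section Invariants

variable {F : Type*} [Field F]

theorem axisRestriction_sig2 (f : MvPolynomial (Fin 2) F) :
    axisRestriction 0 (sig2 F f) = axisRestriction 1 f := by
  have : (axisRestriction 0).comp (sig2 F) = axisRestriction (R := F) 1 :=
    algHom_ext fun i => by fin_cases i <;> simp [axisRestriction, sig2]
  exact DFunLike.congr_fun this f

theorem axisRestriction_rho2 (lam : F) (f : MvPolynomial (Fin 2) F) :
    axisRestriction 0 (rho2 F lam f) =
      (axisRestriction 0 f).comp (Polynomial.C lam * Polynomial.X) := by
  have : (axisRestriction 0).comp (rho2 F lam) =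
      (Polynomial.aeval (Polynomial.C lam * Polynomial.X)).comp (axisRestriction (R := F) 0) :=
    algHom_ext fun i => by fin_cases i <;> simp [axisRestriction, rho2]
  rw [Polynomial.comp_eq_aeval]
  exact DFunLike.congr_fun this f

theorem hilbertIdeal2_le_axisIdeal {p : ℕ} {lam : F} (hlam : IsPrimitiveRoot lam p) :
    HilbertIdeal2 F lam ≤ axisIdeal F p := by
  refine Ideal.span_le.mpr fun g ⟨hsig, hrho, hconst⟩ => ?_
  have hsymm : axisRestriction 1 g = axisRestriction 0 g := by
    rw [← axisRestriction_sig2, hsig]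
  have hdvd : Polynomial.X ^ p ∣ axisRestriction 0 g := by
    refine Polynomial.X_pow_dvd_iff.mpr fun d hd => ?_
    rcases Nat.eq_zero_or_pos d with rfl | hd0
    · rwa [coeff_axisRestriction, Finsupp.single_zero, ← constantCoeff_eq]
    · have h := congrArg (Polynomial.coeff · d) (axisRestriction_rho2 lam g)
      simp only [hrho, Polynomial.comp_C_mul_X_coeff] at h
      have hpow : lam ^ d ≠ 1 := hlam.pow_ne_one_of_pos_of_lt hd0.ne' hd
      by_contra hne
      exact hpow ((mul_eq_left₀ hne).mp h.symm)
  refine ⟨fun i => ?_, by simp [hsymm]⟩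
  fin_cases i
  · exact hdvd
  · simpa [hsymm] using hdvd

end Invariants

section LexOrder

theorem lex_single_one_lt_single_zero {m n : ℕ} (hn : 0 < n) :
    Finsupp.single (1 : Fin 2) m ≺[MonomialOrder.lex] Finsupp.single 0 n :=
  MonomialOrder.lex_lt_iff.mpr ⟨0, fun j hj => absurd hj (Fin.not_lt_zero j), by simpa using hn⟩

theorem apply_eq_zero_and_le_of_lex_le_single_one {d : Fin 2 →₀ ℕ} {n : ℕ}
    (h : d ≼[MonomialOrder.lex] Finsupp.single 1 n) : d 0 = 0 ∧ d 1 ≤ n := by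
  rw [MonomialOrder.lex_le_iff, ← not_lt, Finsupp.Lex.lt_iff] at h
  have h0 : d 0 = 0 := by
    by_contra h0
    exact h ⟨0, fun j hj => absurd hj (Fin.not_lt_zero j), by simpa [Nat.pos_iff_ne_zero]⟩
  refine ⟨h0, not_lt.mp fun h1 => h ⟨1, fun j hj => ?_, by simpa using h1⟩⟩
  obtain rfl : j = 0 := by omega
  simpa using h0.symm

end LexOrder

section LeadingMonomials

theorem eq_single_zero_add_single_one (d : Fin 2 →₀ ℕ) :
    d = Finsupp.single 0 (d 0) + Finsupp.single 1 (d 1) := by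
  ext i; fin_cases i <;> simp

variable {R : Type*} [CommRing R]

theorem lex_degree_cases_of_mem_axisIdeal {n : ℕ} (hn : 0 < n) {f : MvPolynomial (Fin 2) R}
    (hf : f ∈ axisIdeal R n) (hf0 : f ≠ 0) :
    Finsupp.single 0 1 + Finsupp.single 1 1 ≤ MonomialOrder.lex.degree f ∨
      Finsupp.single 0 n ≤ MonomialOrder.lex.degree f ∨
      Finsupp.single 1 (n + 1) ≤ MonomialOrder.lex.degree f := by
  set e := MonomialOrder.lex.degree f
  have hce : coeff e f ≠ 0 := mem_support_iff.mp (MonomialOrder.degree_mem_support hf0)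
  have hsplit := eq_single_zero_add_single_one e
  by_cases h1 : e 1 = 0
  · rw [h1, Finsupp.single_zero, add_zero] at hsplit
    refine .inr (.inl (Finsupp.single_le_iff.mpr (not_lt.mp fun hlt => hce ?_)))
    rw [hsplit]
    exact coeff_single_eq_zero_of_mem_axisIdeal hf 0 hlt
  by_cases h0 : e 0 = 0
  · rw [h0, Finsupp.single_zero, zero_add] at hsplit
    refine .inr (.inr (Finsupp.single_le_iff.mpr (Nat.succ_le_of_lt ?_)))
    rcases lt_trichotomy (e 1) n with hlt | heq | hgt
    · exact absurd (coeff_single_eq_zero_of_mem_axisIdeal hf 1 hlt) (hsplit ▸ hce)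
    · have hx : Finsupp.single 0 n ∈ f.support := by
        rw [mem_support_iff, coeff_single_zero_eq_coeff_single_one_of_mem_axisIdeal hf, ← heq,
          ← hsplit]
        exact hce
      have hle : Finsupp.single 0 n ≼[MonomialOrder.lex] e := MonomialOrder.lex.le_degree hx
      rw [hsplit, heq] at hle
      exact absurd hle (not_le.mpr (lex_single_one_lt_single_zero hn))
    · exact hgt
  · refine .inl (hsplit ▸ add_le_add ?_ ?_) <;> simp <;> omega

theorem lex_degree_eq_of_mem_axisIdeal_of_le {n : ℕ} (hn : 0 < n) {f : MvPolynomial (Fin 2) R}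
    (hf : f ∈ axisIdeal R n) (hf0 : f ≠ 0)
    (hle : MonomialOrder.lex.degree f ≤ Finsupp.single 1 (n + 1)) :
    MonomialOrder.lex.degree f = Finsupp.single 1 (n + 1) := by
  have h0 : MonomialOrder.lex.degree f 0 = 0 := by simpa using hle 0
  rcases lex_degree_cases_of_mem_axisIdeal hn hf hf0 with h | h | h
  · simpa [h0] using h 0
  · simpa [h0, hn.ne'] using h 0
  · exact le_antisymm hle h

theorem totalDegree_eq_of_lex_degree_eq_single_one {n : ℕ} {f : MvPolynomial (Fin 2) R}
    (hf0 : f ≠ 0) (hdeg : MonomialOrder.lex.degree f = Finsupp.single 1 n) :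
    f.totalDegree = n := by
  have hsum : ∀ d : Fin 2 →₀ ℕ, (d.sum fun _ e => e) = d 0 + d 1 := fun d => by
    rw [Finsupp.sum_fintype _ _ fun _ => rfl, Fin.sum_univ_two]
  refine le_antisymm (Finset.sup_le fun d hd => ?_) ?_
  · have := apply_eq_zero_and_le_of_lex_le_single_one (hdeg ▸ MonomialOrder.lex.le_degree hd)
    rw [hsum]
    omega
  · have := le_totalDegree (MonomialOrder.lex.degree_mem_support hf0)
    rwa [hsum, hdeg, Finsupp.single_eq_of_ne (by decide), Finsupp.single_eq_same, zero_add]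
      at this

end LeadingMonomials

section Generators

variable {F : Type*} [Field F] {p : ℕ} {lam : F}

theorem X_zero_mul_X_one_mem_hilbertIdeal2 (hp : p ≠ 0) (hlam : IsPrimitiveRoot lam p) :
    (X 0 * X 1 : MvPolynomial (Fin 2) F) ∈ HilbertIdeal2 F lam := by
  refine Ideal.subset_span ⟨by simp [sig2, mul_comm], ?_, by simp⟩
  simp only [rho2, map_mul, aeval_X, Matrix.cons_val_zero, Matrix.cons_val_one]
  rw [mul_mul_mul_comm, ← C_mul, mul_inv_cancel₀ (hlam.ne_zero hp), C_1, one_mul]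

theorem X_zero_pow_add_X_one_pow_mem_hilbertIdeal2 (hp : p ≠ 0) (hlam : IsPrimitiveRoot lam p) :
    (X 0 ^ p + X 1 ^ p : MvPolynomial (Fin 2) F) ∈ HilbertIdeal2 F lam := by
  refine Ideal.subset_span ⟨by simp [sig2, add_comm], ?_, by simp [zero_pow hp]⟩
  simp [rho2, mul_pow, ← C_pow, hlam.pow_eq_one]

theorem X_one_pow_succ_mem_hilbertIdeal2 [CharP F 2] (hp : p ≠ 0)
    (hlam : IsPrimitiveRoot lam p) :
    (X 1 ^ (p + 1) : MvPolynomial (Fin 2) F) ∈ HilbertIdeal2 F lam := by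
  obtain ⟨k, rfl⟩ := Nat.exists_eq_succ_of_ne_zero hp
  have h2 : (2 : MvPolynomial (Fin 2) F) = 0 := CharTwo.two_eq_zero
  have hid : (X 1 ^ (k + 1 + 1) : MvPolynomial (Fin 2) F) =
      X 1 * (X 0 ^ (k + 1) + X 1 ^ (k + 1)) + X 0 ^ k * (X 0 * X 1) := by
    linear_combination (-(X 0 ^ (k + 1) * X 1) : MvPolynomial (Fin 2) F) * h2
  rw [hid]
  exact Ideal.add_mem _
    (Ideal.mul_mem_left _ _ (X_zero_pow_add_X_one_pow_mem_hilbertIdeal2 hp hlam))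
    (Ideal.mul_mem_left _ _ (X_zero_mul_X_one_mem_hilbertIdeal2 hp hlam))

end Generators

section Degrees

variable {F : Type*} [Field F]

theorem lex_degree_X_zero_mul_X_one :
    MonomialOrder.lex.degree (X 0 * X 1 : MvPolynomial (Fin 2) F) =
      Finsupp.single 0 1 + Finsupp.single 1 1 := by
  rw [MonomialOrder.degree_mul (X_ne_zero _) (X_ne_zero _), MonomialOrder.degree_X,
    MonomialOrder.degree_X]

theorem lex_degree_X_pow (i : Fin 2) (n : ℕ) :
    MonomialOrder.lex.degree (X i ^ n : MvPolynomial (Fin 2) F) = Finsupp.single i n := by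
  simp [MonomialOrder.degree_pow, MonomialOrder.degree_X]

theorem lex_degree_X_zero_pow_add_X_one_pow {n : ℕ} (hn : 0 < n) :
    MonomialOrder.lex.degree (X 0 ^ n + X 1 ^ n : MvPolynomial (Fin 2) F) =
      Finsupp.single 0 n := by
  have hlt : MonomialOrder.lex.degree (X 1 ^ n : MvPolynomial (Fin 2) F) ≺[MonomialOrder.lex]
      MonomialOrder.lex.degree (X 0 ^ n : MvPolynomial (Fin 2) F) := by
    rw [lex_degree_X_pow, lex_degree_X_pow]
    exact lex_single_one_lt_single_zero hn
  rw [MonomialOrder.degree_add_of_lt hlt, lex_degree_X_pow]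

end Degrees

section LeadTermIdeal

variable {σ R : Type*} [CommSemiring R]

theorem lmExp_eq_degree (m : MonomialOrder σ) (f : MvPolynomial σ R) :
    lmExp m f = m.degree f := rfl

def leadTermIdeal (m : MonomialOrder σ) (I : Ideal (MvPolynomial σ R)) :
    Ideal (MvPolynomial σ R) :=
  Ideal.span ((fun f => monomial (m.degree f) 1) '' {f | f ∈ I ∧ f ≠ 0})

theorem monomial_one_mem_span_monomial_image_iff [Nontrivial R] {d : σ →₀ ℕ}
    {S : Set (σ →₀ ℕ)} :
    monomial d (1 : R) ∈ Ideal.span ((fun s => monomial s 1) '' S) ↔ ∃ s ∈ S, s ≤ d := by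
  classical
  rw [mem_ideal_span_monomial_image, support_monomial, if_neg one_ne_zero]
  simp

theorem leadTermIdeal_eq_span_monomial_image [Nontrivial R] {m : MonomialOrder σ}
    {I : Ideal (MvPolynomial σ R)} {S : Set (σ →₀ ℕ)}
    (hdvd : ∀ f ∈ I, f ≠ 0 → ∃ s ∈ S, s ≤ m.degree f)
    (hlead : ∀ s ∈ S, ∃ f ∈ I, f ≠ 0 ∧ m.degree f = s) :
    leadTermIdeal m I = Ideal.span ((fun s => monomial s 1) '' S) := by
  refine le_antisymm (Ideal.span_le.mpr ?_) (Ideal.span_mono ?_)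
  · rintro _ ⟨f, ⟨hf, hf0⟩, rfl⟩
    exact monomial_one_mem_span_monomial_image_iff.mpr (hdvd f hf hf0)
  · rintro _ ⟨s, hs, rfl⟩
    obtain ⟨f, hf, hf0, rfl⟩ := hlead s hs
    exact ⟨f, ⟨hf, hf0⟩, rfl⟩

end LeadTermIdeal

theorem leadTermIdeal_hilbertIdeal2 {F : Type*} [Field F] [CharP F 2] {p : ℕ} (hp : 0 < p)
    {lam : F} (hlam : IsPrimitiveRoot lam p) :
    leadTermIdeal MonomialOrder.lex (HilbertIdeal2 F lam) =
      Ideal.span ((fun s => monomial s 1) '' {Finsupp.single 0 1 + Finsupp.single 1 1,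
        Finsupp.single 0 p, Finsupp.single 1 (p + 1)}) := by
  refine leadTermIdeal_eq_span_monomial_image (fun f hf hf0 => by
    simpa using lex_degree_cases_of_mem_axisIdeal hp (hilbertIdeal2_le_axisIdeal hlam hf) hf0) ?_
  rintro s (rfl | rfl | rfl)
  · exact ⟨_, X_zero_mul_X_one_mem_hilbertIdeal2 hp.ne' hlam,
      mul_ne_zero (X_ne_zero _) (X_ne_zero _), lex_degree_X_zero_mul_X_one⟩
  · have hdeg := lex_degree_X_zero_pow_add_X_one_pow (F := F) hp
    exact ⟨_, X_zero_pow_add_X_one_pow_mem_hilbertIdeal2 hp.ne' hlam,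
      MonomialOrder.lex.ne_zero_of_degree_ne_zero (by simp [hdeg, hp.ne']), hdeg⟩
  · exact ⟨_, X_one_pow_succ_mem_hilbertIdeal2 hp.ne' hlam, pow_ne_zero _ (X_ne_zero _),
      lex_degree_X_pow 1 (p + 1)⟩

theorem X_zero_mul_X_one_eq_monomial {R : Type*} [CommSemiring R] :
    (X 0 * X 1 : MvPolynomial (Fin 2) R) =
      monomial (Finsupp.single 0 1 + Finsupp.single 1 1) 1 := by
  rw [X, X, monomial_mul, one_mul]

theorem leadTermIdeal_hilbertIdeal_two_var_general
    {F : Type*} [Field F] [CharP F 2] {p : ℕ} (hp : p.Prime)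
    (lam : F) (hlam : IsPrimitiveRoot lam p) :
    Ideal.span ((fun f : MvPolynomial (Fin 2) F =>
        (monomial (lmExp MonomialOrder.lex f) 1 : MvPolynomial (Fin 2) F)) ''
        {f | f ∈ HilbertIdeal2 F lam ∧ f ≠ 0}) =
      Ideal.span {(X 0 * X 1 : MvPolynomial (Fin 2) F),
        (X 0 : MvPolynomial (Fin 2) F) ^ p, (X 1 : MvPolynomial (Fin 2) F) ^ (p + 1)} ∧
    ((X 0 * X 1 : MvPolynomial (Fin 2) F) ∉
        Ideal.span {(X 0 : MvPolynomial (Fin 2) F) ^ p,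
          (X 1 : MvPolynomial (Fin 2) F) ^ (p + 1)} ∧
      (X 0 : MvPolynomial (Fin 2) F) ^ p ∉
        Ideal.span {(X 0 * X 1 : MvPolynomial (Fin 2) F),
          (X 1 : MvPolynomial (Fin 2) F) ^ (p + 1)} ∧
      (X 1 : MvPolynomial (Fin 2) F) ^ (p + 1) ∉
        Ideal.span {(X 0 * X 1 : MvPolynomial (Fin 2) F),
          (X 0 : MvPolynomial (Fin 2) F) ^ p}) ∧
    ∀ 𝒢 : Set (MvPolynomial (Fin 2) F),
      Ideal.span 𝒢 = HilbertIdeal2 F lam →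
      (∀ f ∈ HilbertIdeal2 F lam, f ≠ 0 → ∃ g ∈ 𝒢, g ≠ 0 ∧
        (monomial (lmExp MonomialOrder.lex g) 1 : MvPolynomial (Fin 2) F) ∣
          monomial (lmExp MonomialOrder.lex f) 1) →
      ∃ g ∈ 𝒢, g.totalDegree = p + 1 := by
  have hpair (a b : Fin 2 →₀ ℕ) : ({monomial a 1, monomial b 1} : Set (MvPolynomial (Fin 2) F)) =
      (fun s => monomial s 1) '' {a, b} := (Set.image_pair (fun s => monomial s 1) a b).symm
  simp only [lmExp_eq_degree]
  rw [X_zero_mul_X_one_eq_monomial, X_pow_eq_monomial, X_pow_eq_monomial]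
  refine ⟨?_, ?_, fun 𝒢 hspan hGB => ?_⟩
  · have := leadTermIdeal_hilbertIdeal2 hp.pos hlam
    rwa [Set.image_insert_eq, Set.image_insert_eq, Set.image_singleton] at this
  · simp only [hpair, monomial_one_mem_span_monomial_image_iff]
    simp [Finsupp.le_def, Fin.forall_fin_two, hp.one_lt, hp.ne_zero]
  · obtain ⟨g, hg𝒢, hg0, hdvd⟩ := hGB _ (X_one_pow_succ_mem_hilbertIdeal2 hp.ne_zero hlam)
      (pow_ne_zero _ (X_ne_zero _))
    rw [lex_degree_X_pow, monomial_dvd_monomial] at hdvd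
    have hg : g ∈ axisIdeal F p := hilbertIdeal2_le_axisIdeal hlam (hspan ▸ Ideal.subset_span hg𝒢)
    exact ⟨g, hg𝒢, totalDegree_eq_of_lex_degree_eq_single_one hg0
      (lex_degree_eq_of_mem_axisIdeal_of_le hp.pos hg hg0 (by simpa using hdvd))⟩

/-- For the lexicographic order on `F[x,y]` with `x = X 0 > y = X 1`, the lead
term ideal of the Hilbert ideal `I_H` is minimally generated by `xy`, `x^p` and `y^(p+1)`;
in particular every Gröbner basis of `I_H` for this order contains an element of degree
`p + 1`. -/
theorem leadTermIdeal_hilbertIdeal_two_var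
    {F : Type*} [Field F] [CharP F 2] {p : ℕ} (hp : p.Prime) (hodd : Odd p)
    (lam : F) (hlam : IsPrimitiveRoot lam p) :
    Ideal.span ((fun f : MvPolynomial (Fin 2) F =>
        (monomial (lmExp MonomialOrder.lex f) 1 : MvPolynomial (Fin 2) F)) ''
        {f | f ∈ HilbertIdeal2 F lam ∧ f ≠ 0}) =
      Ideal.span {(X 0 * X 1 : MvPolynomial (Fin 2) F),
        (X 0 : MvPolynomial (Fin 2) F) ^ p, (X 1 : MvPolynomial (Fin 2) F) ^ (p + 1)} ∧
    ((X 0 * X 1 : MvPolynomial (Fin 2) F) ∉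
        Ideal.span {(X 0 : MvPolynomial (Fin 2) F) ^ p,
          (X 1 : MvPolynomial (Fin 2) F) ^ (p + 1)} ∧
      (X 0 : MvPolynomial (Fin 2) F) ^ p ∉
        Ideal.span {(X 0 * X 1 : MvPolynomial (Fin 2) F),
          (X 1 : MvPolynomial (Fin 2) F) ^ (p + 1)} ∧
      (X 1 : MvPolynomial (Fin 2) F) ^ (p + 1) ∉
        Ideal.span {(X 0 * X 1 : MvPolynomial (Fin 2) F),
          (X 0 : MvPolynomial (Fin 2) F) ^ p}) ∧
    ∀ 𝒢 : Set (MvPolynomial (Fin 2) F),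
      Ideal.span 𝒢 = HilbertIdeal2 F lam →
      (∀ f ∈ HilbertIdeal2 F lam, f ≠ 0 → ∃ g ∈ 𝒢, g ≠ 0 ∧
        (monomial (lmExp MonomialOrder.lex g) 1 : MvPolynomial (Fin 2) F) ∣
          monomial (lmExp MonomialOrder.lex f) 1) →
      ∃ g ∈ 𝒢, g.totalDegree = p + 1 :=
  leadTermIdeal_hilbertIdeal_two_var_general hp lam hlam
end
end

section
/- Let p be an odd prime. Every element of the Hilbert ideal I_H ⊆ F[x,y] of total degree less than p is divisible by xy. Consequently, I_H is not generated by invariants of degree less than p, so the bound p (in the statement that the Hilbert ideal is generated by invariants of positive degree at most p) is sharp. -/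
open MvPolynomial

noncomputable section

/-! A `ρ`-invariant polynomial only involves monomials `x^a y^b` with `λ^a λ^{-b} = 1`, i.e.
`a ≡ b [MOD p]`. Below degree `p` this forces `a = b`, and without constant term `a = b ≥ 1`;
so every invariant of positive degree lies in the monomial ideal `(xy) + (x, y)^p`, and so does
all of `I_H`. An element of that ideal of degree `< p` is divisible by `xy`. In particular the
invariants of degree `< p` only generate ideals inside `(xy)`, whereas the invariant `x^p + y^p`
is not divisible by `xy`. -/

namespace MvPolynomial

variable {R σ : Type*} [CommSemiring R]

theorem coeff_aeval_C_mul_X (a : σ → R) (f : MvPolynomial σ R) (m : σ →₀ ℕ) :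
    coeff m (aeval (fun i => C (a i) * X i) f) = (m.prod fun i e => a i ^ e) * coeff m f := by
  classical
  induction f using MvPolynomial.induction_on' with
  | add f g hf hg => simp only [map_add, coeff_add, hf, hg, mul_add]
  | monomial u r =>
    have hu : aeval (fun i => C (a i) * X i) (monomial u r) =
        monomial u ((u.prod fun i e => a i ^ e) * r) := by
      rw [aeval_monomial, monomial_eq, C_mul, algebraMap_eq]
      simp only [mul_pow, Finsupp.prod_mul, ← C_pow, ← map_finsuppProd]
      ring
    rw [hu, coeff_monomial, coeff_monomial]
    split_ifs with h
    · rw [h]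
    · rw [mul_zero]

theorem prod_pow_eq_one_of_aeval_C_mul_X_eq_self [IsRightCancelMulZero R] {a : σ → R}
    {f : MvPolynomial σ R} (hf : aeval (fun i => C (a i) * X i) f = f) {m : σ →₀ ℕ}
    (hm : m ∈ f.support) : (m.prod fun i e => a i ^ e) = 1 := by
  have h := congrArg (coeff m) hf
  rwa [coeff_aeval_C_mul_X, mul_eq_right₀ (mem_support_iff.mp hm)] at h

theorem monomial_one_dvd_iff_forall_le {i : σ →₀ ℕ} {f : MvPolynomial σ R} :
    monomial i (1 : R) ∣ f ↔ ∀ m ∈ f.support, i ≤ m := by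
  rw [← Ideal.mem_span_singleton, ← Set.image_singleton (f := fun m => monomial m (1 : R)),
    mem_ideal_span_monomial_image]
  simp

theorem X_zero_mul_X_one_dvd_iff {f : MvPolynomial (Fin 2) R} :
    X 0 * X 1 ∣ f ↔ ∀ m ∈ f.support, 0 < m 0 ∧ 0 < m 1 := by
  rw [X, X, monomial_mul, one_mul, monomial_one_dvd_iff_forall_le]
  refine forall₂_congr fun m _ => ?_
  simp [Finsupp.le_def, Fin.forall_fin_two, Nat.one_le_iff_ne_zero, Nat.pos_iff_ne_zero]

theorem add_le_totalDegree {f : MvPolynomial (Fin 2) R} {m : Fin 2 →₀ ℕ} (hm : m ∈ f.support) :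
    m 0 + m 1 ≤ f.totalDegree := by
  simpa [Finsupp.sum_fintype, Fin.sum_univ_two] using le_totalDegree hm

end MvPolynomial

section

variable {R : Type*} [CommSemiring R]

/-- The monomial ideal `(xy) + (x, y)^n`. -/
def xySupPowIdeal (R : Type*) [CommSemiring R] (n : ℕ) : Ideal (MvPolynomial (Fin 2) R) :=
  Ideal.span ((fun m => monomial m 1) '' {m | (0 < m 0 ∧ 0 < m 1) ∨ n ≤ m 0 + m 1})

theorem mem_xySupPowIdeal_of_forall {n : ℕ} {f : MvPolynomial (Fin 2) R}
    (h : ∀ m ∈ f.support, (0 < m 0 ∧ 0 < m 1) ∨ n ≤ m 0 + m 1) : f ∈ xySupPowIdeal R n :=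
  mem_ideal_span_monomial_image.mpr fun m hm => ⟨m, h m hm, le_rfl⟩

theorem X_zero_mul_X_one_dvd_of_mem_xySupPowIdeal {n : ℕ} {f : MvPolynomial (Fin 2) R}
    (hf : f ∈ xySupPowIdeal R n) (hdeg : f.totalDegree < n) : X 0 * X 1 ∣ f := by
  refine X_zero_mul_X_one_dvd_iff.mpr fun m hm => ?_
  obtain ⟨s, hs, hsm⟩ := mem_ideal_span_monomial_image.mp hf m hm
  have h0 := hsm 0
  have h1 := hsm 1
  have := add_le_totalDegree hm
  rcases hs with hs | hs <;> omega

theorem not_X_zero_mul_X_one_dvd_X_pow_add_X_pow [Nontrivial R] {p : ℕ} (hp : p ≠ 0) :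
    ¬ X 0 * X 1 ∣ (X 0 ^ p + X 1 ^ p : MvPolynomial (Fin 2) R) := by
  rw [X_zero_mul_X_one_dvd_iff]
  intro h
  have hmem : Finsupp.single 0 p ∈ (X 0 ^ p + X 1 ^ p : MvPolynomial (Fin 2) R).support := by
    rw [mem_support_iff, coeff_add, coeff_X_pow, coeff_X_pow, if_pos rfl, if_neg]
    · simp
    · simp [Finsupp.single_eq_single_iff, hp]
  simpa using (h _ hmem).2

variable {F : Type*} [Field F] {lam : F} {p : ℕ}

theorem rho2_eq_aeval (lam : F) : rho2 F lam = aeval fun i => C (![lam, lam⁻¹] i) * X i := by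
  unfold rho2
  congr 1
  funext i
  fin_cases i <;> rfl

theorem modEq_of_mem_support_of_rho2_eq_self (hp : p ≠ 0) (hlam : IsPrimitiveRoot lam p)
    {f : MvPolynomial (Fin 2) F} (hf : rho2 F lam f = f) {m : Fin 2 →₀ ℕ} (hm : m ∈ f.support) :
    m 0 ≡ m 1 [MOD p] := by
  have h := prod_pow_eq_one_of_aeval_C_mul_X_eq_self (rho2_eq_aeval lam ▸ hf) hm
  rw [Finsupp.prod_fintype _ _ fun _ => pow_zero _, Fin.prod_univ_two] at h
  have hpow : lam ^ m 0 = lam ^ m 1 := by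
    simpa [inv_pow, mul_inv_eq_one₀ (pow_ne_zero _ (hlam.ne_zero hp))] using h
  rwa [(hlam.isOfFinOrder hp).pow_eq_pow_iff_modEq, ← hlam.eq_orderOf] at hpow

theorem pos_of_mem_support_of_rho2_eq_self (hp : p ≠ 0) (hlam : IsPrimitiveRoot lam p)
    {f : MvPolynomial (Fin 2) F} (hf : rho2 F lam f = f) (h0 : constantCoeff f = 0)
    {m : Fin 2 →₀ ℕ} (hm : m ∈ f.support) (hdeg : m 0 + m 1 < p) : 0 < m 0 ∧ 0 < m 1 := by
  have heq : m 0 = m 1 :=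
    (modEq_of_mem_support_of_rho2_eq_self hp hlam hf hm).eq_of_lt_of_lt (by omega) (by omega)
  have hm0 : m ≠ 0 := by
    rintro rfl
    exact mem_support_iff.mp hm (by rwa [← constantCoeff_eq])
  have : m 0 ≠ 0 := fun h => hm0 (Finsupp.ext fun i => by fin_cases i <;> simp [h, ← heq])
  omega

theorem hilbertIdeal2_le_xySupPowIdeal (hp : p ≠ 0) (hlam : IsPrimitiveRoot lam p) :
    HilbertIdeal2 F lam ≤ xySupPowIdeal F p := by
  refine Ideal.span_le.mpr fun f ⟨_, hρ, h0⟩ => mem_xySupPowIdeal_of_forall fun m hm => ?_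
  by_cases hdeg : m 0 + m 1 < p
  · exact Or.inl (pos_of_mem_support_of_rho2_eq_self hp hlam hρ h0 hm hdeg)
  · exact Or.inr (not_lt.mp hdeg)

theorem X_pow_add_X_pow_mem_hilbertIdeal2 (hp : p ≠ 0) (hlam : IsPrimitiveRoot lam p) :
    X 0 ^ p + X 1 ^ p ∈ HilbertIdeal2 F lam := by
  refine Ideal.subset_span ⟨?_, ?_, ?_⟩
  · simp [sig2, add_comm]
  · simp [rho2, mul_pow, ← C_pow, hlam.pow_eq_one]
  · simp [hp]

end

theorem hilbertIdeal_two_var_degree_bound_sharp_general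
    {F : Type*} [Field F] {p : ℕ} (hp : p.Prime)
    (lam : F) (hlam : IsPrimitiveRoot lam p) :
    (∀ f ∈ HilbertIdeal2 F lam, f.totalDegree < p →
      (X 0 * X 1 : MvPolynomial (Fin 2) F) ∣ f) ∧
    HilbertIdeal2 F lam ≠
      Ideal.span {f : MvPolynomial (Fin 2) F |
        sig2 F f = f ∧ rho2 F lam f = f ∧ constantCoeff f = 0 ∧ f.totalDegree < p} := by
  have low_dvd : ∀ f ∈ HilbertIdeal2 F lam, f.totalDegree < p → X 0 * X 1 ∣ f := fun f hf =>
    X_zero_mul_X_one_dvd_of_mem_xySupPowIdeal (hilbertIdeal2_le_xySupPowIdeal hp.ne_zero hlam hf)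
  refine ⟨low_dvd, fun heq => not_X_zero_mul_X_one_dvd_X_pow_add_X_pow (R := F) hp.ne_zero ?_⟩
  have hlow : Ideal.span {f : MvPolynomial (Fin 2) F |
      sig2 F f = f ∧ rho2 F lam f = f ∧ constantCoeff f = 0 ∧ f.totalDegree < p} ≤
      Ideal.span {X 0 * X 1} := Ideal.span_le.mpr fun g ⟨hσ, hρ, h0, hdeg⟩ =>
    Ideal.mem_span_singleton.mpr (low_dvd g (Ideal.subset_span ⟨hσ, hρ, h0⟩) hdeg)
  exact Ideal.mem_span_singleton.mp (hlow (heq ▸ X_pow_add_X_pow_mem_hilbertIdeal2 hp.ne_zero hlam))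

/-- Every element of the Hilbert ideal `I_H ⊆ F[x,y]` of total degree less
than `p` is divisible by `xy`; consequently `I_H` is not generated by the invariants of
degree less than `p`, so the bound `p` is sharp. -/
theorem hilbertIdeal_two_var_degree_bound_sharp
    {F : Type*} [Field F] [CharP F 2] {p : ℕ} (hp : p.Prime) (hodd : Odd p)
    (lam : F) (hlam : IsPrimitiveRoot lam p) :
    (∀ f ∈ HilbertIdeal2 F lam, f.totalDegree < p →
      (X 0 * X 1 : MvPolynomial (Fin 2) F) ∣ f) ∧
    HilbertIdeal2 F lam ≠
      Ideal.span {f : MvPolynomial (Fin 2) F |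
        sig2 F f = f ∧ rho2 F lam f = f ∧ constantCoeff f = 0 ∧ f.totalDegree < p} :=
  hilbertIdeal_two_var_degree_bound_sharp_general hp lam hlam
end
end
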